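/- Let Ω ⊆ ℝ³ be open, and let ρ : Ω → ℝ with ρ > 0, u = (u₁,u₂,u₃) : Ω → ℝ³ with u₁ > 0, and φ : Ω → ℝ be C² functions satisfying the steady Euler–Poisson continuity equation ∂₁(ρu₁)+∂₂(ρu₂)+∂₃(ρu₃) = 0 and momentum equations ∂₁(ρu_iu₁)+∂₂(ρu_iu₂)+∂₃(ρu_iu₃)+∂_i(p(ρ)) = ρ∂_iφ for i = 1,2,3. Assume moreover that the Bernoulli function B = ½(u₁²+u₂²+u₃²) + h(ρ) − φ is constant on Ω. Set β₂ = u₂/u₁, β₃ = u₃/u₁, G = 1 + β₂² + β₃², D = ∂₁ + β₂∂₂ + β₃∂₃, and W = ∂₂β₃ − ∂₃β₂ + β₃∂₁β₂ − β₂∂₁β₃. Then D(W/(ρG)) = 0 on Ω, i.e. the quantity W/(ρG) is conserved along the particle paths. -/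

import Mathlib

open Real Set MeasureTheory

/-- The `i`-th partial derivative of a function on `ℝ³`. -/
noncomputable def pd (i : Fin 3) (f : (Fin 3 → ℝ) → ℝ) (x : Fin 3 → ℝ) : ℝ :=
  fderiv ℝ f x (Pi.single i 1)

/-- The slope `β₂ = u₂/u₁`. -/
noncomputable def beta2 (u1 u2 : (Fin 3 → ℝ) → ℝ) : (Fin 3 → ℝ) → ℝ :=
  fun x => u2 x / u1 x

/-- The slope `β₃ = u₃/u₁`. -/
noncomputable def beta3 (u1 u3 : (Fin 3 → ℝ) → ℝ) : (Fin 3 → ℝ) → ℝ :=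
  fun x => u3 x / u1 x

/-- `G = 1 + β₂² + β₃²`. -/
noncomputable def Gfun (u1 u2 u3 : (Fin 3 → ℝ) → ℝ) : (Fin 3 → ℝ) → ℝ :=
  fun x => 1 + (beta2 u1 u2 x) ^ 2 + (beta3 u1 u3 x) ^ 2

/-- `W = ∂₂β₃ − ∂₃β₂ + β₃∂₁β₂ − β₂∂₁β₃`. -/
noncomputable def Wfun (u1 u2 u3 : (Fin 3 → ℝ) → ℝ) : (Fin 3 → ℝ) → ℝ :=
  fun x => pd 1 (beta3 u1 u3) x - pd 2 (beta2 u1 u2) x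
    + beta3 u1 u3 x * pd 0 (beta2 u1 u2) x - beta2 u1 u2 x * pd 0 (beta3 u1 u3) x

/-- The transport operator `D = ∂₁ + β₂∂₂ + β₃∂₃`. -/
noncomputable def Dop (u1 u2 u3 : (Fin 3 → ℝ) → ℝ) (f : (Fin 3 → ℝ) → ℝ)
    (x : Fin 3 → ℝ) : ℝ :=
  pd 0 f x + beta2 u1 u2 x * pd 1 f x + beta3 u1 u3 x * pd 2 f x

/-- The Bernoulli function `B = ½(u₁²+u₂²+u₃²) + h(ρ) − φ`. -/
noncomputable def Bfun (ρ u1 u2 u3 φ : (Fin 3 → ℝ) → ℝ) (h : ℝ → ℝ) :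
    (Fin 3 → ℝ) → ℝ :=
  fun x => (1 / 2) * ((u1 x) ^ 2 + (u2 x) ^ 2 + (u3 x) ^ 2) + h (ρ x) - φ x

/-!
Eliminating the continuity equation from the momentum equations gives
`ρ (u · ∇) u + ∇p(ρ) = ρ ∇φ`, while `∇B = 0` gives `ρ ∇(|u|²/2) + ∇p(ρ) = ρ ∇φ`. Hence
`(u · ∇) u = ∇(|u|²/2)`, i.e. `curl u × u = 0`, so `curl u = λ u` with `λ = (curl u)₁ / u₁`
(Crocco). In the slope variables `W / G = u · curl u / |u|² = λ`. As `div curl u = 0`, `λ`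
satisfies the same continuity equation `div (λ u) = 0` as `ρ`, so `λ / ρ = W / (ρ G)` is
transported by `u`; and `D = u₁⁻¹ (u · ∇)`.
-/

section PartialDerivatives

variable {f g : (Fin 3 → ℝ) → ℝ} {x : Fin 3 → ℝ} {i : Fin 3} {Ω : Set (Fin 3 → ℝ)}

theorem pd_congr_of_eqOn (hΩ : IsOpen Ω) (hx : x ∈ Ω) (hfg : EqOn f g Ω) :
    pd i f x = pd i g x := by
  rw [pd, (hfg.eventuallyEq_of_mem (hΩ.mem_nhds hx)).fderiv_eq, pd]

theorem pd_const (c : ℝ) : pd i (fun _ => c) x = 0 := by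
  simp [pd]

theorem pd_add (hf : DifferentiableAt ℝ f x) (hg : DifferentiableAt ℝ g x) :
    pd i (fun y => f y + g y) x = pd i f x + pd i g x := by
  simp [pd, fderiv_fun_add hf hg]

theorem pd_sub (hf : DifferentiableAt ℝ f x) (hg : DifferentiableAt ℝ g x) :
    pd i (fun y => f y - g y) x = pd i f x - pd i g x := by
  simp [pd, fderiv_fun_sub hf hg]

theorem pd_mul (hf : DifferentiableAt ℝ f x) (hg : DifferentiableAt ℝ g x) :
    pd i (fun y => f y * g y) x = pd i f x * g x + f x * pd i g x := by
  simp [pd, fderiv_fun_mul hf hg]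
  ring

theorem pd_pow (hf : DifferentiableAt ℝ f x) (n : ℕ) :
    pd i (fun y => f y ^ n) x = n * f x ^ (n - 1) * pd i f x := by
  simp [pd, fderiv_fun_pow n hf]

theorem pd_comp {F : ℝ → ℝ} {F' : ℝ} (hF : HasDerivAt F F' (f x))
    (hf : DifferentiableAt ℝ f x) : pd i (fun y => F (f y)) x = F' * pd i f x := by
  rw [pd, show (fun y => F (f y)) = F ∘ f from rfl,
    (hF.comp_hasFDerivAt x hf.hasFDerivAt).fderiv]
  simp [pd]

theorem pd_div (hf : DifferentiableAt ℝ f x) (hg : DifferentiableAt ℝ g x) (hg0 : g x ≠ 0) :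
    pd i (fun y => f y / g y) x = (pd i f x * g x - f x * pd i g x) / g x ^ 2 := by
  simp only [div_eq_mul_inv]
  rw [pd_mul (g := fun y => (g y)⁻¹) hf (hg.inv hg0), pd_comp (hasDerivAt_inv hg0) hg]
  field_simp
  ring

theorem differentiableAt_pd (hΩ : IsOpen Ω) (hf : ContDiffOn ℝ 2 f Ω) (hx : x ∈ Ω) (j : Fin 3) :
    DifferentiableAt ℝ (pd j f) x :=
  (((hf.contDiffAt (hΩ.mem_nhds hx)).fderiv_right (m := 1) (by norm_num)).differentiableAt
    one_ne_zero).clm_apply (differentiableAt_const _)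

theorem pd_comm (hΩ : IsOpen Ω) (hf : ContDiffOn ℝ 2 f Ω) (hx : x ∈ Ω) (i j : Fin 3) :
    pd i (pd j f) x = pd j (pd i f) x := by
  have hf2 : ContDiffAt ℝ 2 f x := hf.contDiffAt (hΩ.mem_nhds hx)
  have hdf : DifferentiableAt ℝ (fderiv ℝ f) x :=
    (hf2.fderiv_right (m := 1) (by norm_num)).differentiableAt one_ne_zero
  have hsecond : ∀ v w : Fin 3 → ℝ,
      fderiv ℝ (fun y => fderiv ℝ f y v) x w = fderiv ℝ (fderiv ℝ f) x w v := by
    intro v w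
    simp [fderiv_clm_apply hdf (differentiableAt_const v)]
  change fderiv ℝ (fun y => fderiv ℝ f y _) x _ = fderiv ℝ (fun y => fderiv ℝ f y _) x _
  rw [hsecond, hsecond]
  exact hf2.isSymmSndFDerivAt (by norm_num) _ _

end PartialDerivatives

section VectorCalculus

variable {f g a u1 u2 u3 : (Fin 3 → ℝ) → ℝ} {x : Fin 3 → ℝ} {Ω : Set (Fin 3 → ℝ)}

noncomputable def divergence (u1 u2 u3 : (Fin 3 → ℝ) → ℝ) (x : Fin 3 → ℝ) : ℝ :=
  pd 0 u1 x + pd 1 u2 x + pd 2 u3 x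

noncomputable def advect (u1 u2 u3 f : (Fin 3 → ℝ) → ℝ) (x : Fin 3 → ℝ) : ℝ :=
  u1 x * pd 0 f x + u2 x * pd 1 f x + u3 x * pd 2 f x

/-- Components of `curl u`, numbered like `u1 u2 u3` (while `∂₁` is `pd 0`). -/
noncomputable def curl1 (u2 u3 : (Fin 3 → ℝ) → ℝ) : (Fin 3 → ℝ) → ℝ :=
  fun y => pd 1 u3 y - pd 2 u2 y

noncomputable def curl2 (u1 u3 : (Fin 3 → ℝ) → ℝ) : (Fin 3 → ℝ) → ℝ :=
  fun y => pd 2 u1 y - pd 0 u3 y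

noncomputable def curl3 (u1 u2 : (Fin 3 → ℝ) → ℝ) : (Fin 3 → ℝ) → ℝ :=
  fun y => pd 0 u2 y - pd 1 u1 y

theorem divergence_mul (ha : DifferentiableAt ℝ a x) (hu1 : DifferentiableAt ℝ u1 x)
    (hu2 : DifferentiableAt ℝ u2 x) (hu3 : DifferentiableAt ℝ u3 x) :
    divergence (fun y => a y * u1 y) (fun y => a y * u2 y) (fun y => a y * u3 y) x
      = advect u1 u2 u3 a x + a x * divergence u1 u2 u3 x := by
  simp only [divergence, advect, pd_mul ha hu1, pd_mul ha hu2, pd_mul ha hu3]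
  ring

theorem divergence_curl (hΩ : IsOpen Ω) (hx : x ∈ Ω) (hu1 : ContDiffOn ℝ 2 u1 Ω)
    (hu2 : ContDiffOn ℝ 2 u2 Ω) (hu3 : ContDiffOn ℝ 2 u3 Ω) :
    divergence (curl1 u2 u3) (curl2 u1 u3) (curl3 u1 u2) x = 0 := by
  have d1 := differentiableAt_pd hΩ hu1 hx
  have d2 := differentiableAt_pd hΩ hu2 hx
  have d3 := differentiableAt_pd hΩ hu3 hx
  unfold divergence curl1 curl2 curl3
  rw [pd_sub (d3 1) (d2 2), pd_sub (d1 2) (d3 0), pd_sub (d2 0) (d1 1),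
    pd_comm hΩ hu1 hx 1 2, pd_comm hΩ hu2 hx 0 2, pd_comm hΩ hu3 hx 0 1]
  ring

theorem advect_congr_of_eqOn (hΩ : IsOpen Ω) (hx : x ∈ Ω) (hfg : EqOn f g Ω) :
    advect u1 u2 u3 f x = advect u1 u2 u3 g x := by
  simp only [advect, pd_congr_of_eqOn hΩ hx hfg]

theorem advect_div (hf : DifferentiableAt ℝ f x) (hg : DifferentiableAt ℝ g x) (hg0 : g x ≠ 0) :
    advect u1 u2 u3 (fun y => f y / g y) x
      = (advect u1 u2 u3 f x * g x - f x * advect u1 u2 u3 g x) / g x ^ 2 := by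
  simp only [advect, pd_div hf hg hg0]
  field_simp
  ring

/-- The ratio of two densities obeying the same steady continuity equation is transported. -/
theorem advect_div_eq_zero (hf : DifferentiableAt ℝ f x) (hg : DifferentiableAt ℝ g x)
    (hg0 : g x ≠ 0) (hfu : advect u1 u2 u3 f x + f x * divergence u1 u2 u3 x = 0)
    (hgu : advect u1 u2 u3 g x + g x * divergence u1 u2 u3 x = 0) :
    advect u1 u2 u3 (fun y => f y / g y) x = 0 := by
  rw [advect_div hf hg hg0, div_eq_zero_iff]
  left
  linear_combination g x * hfu - f x * hgu

theorem advect_add_mul_divergence_of_curl_eq {lam : (Fin 3 → ℝ) → ℝ} (hΩ : IsOpen Ω)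
    (hx : x ∈ Ω) (hu1 : ContDiffOn ℝ 2 u1 Ω) (hu2 : ContDiffOn ℝ 2 u2 Ω)
    (hu3 : ContDiffOn ℝ 2 u3 Ω) (hlam : DifferentiableAt ℝ lam x)
    (h1 : EqOn (curl1 u2 u3) (fun y => lam y * u1 y) Ω)
    (h2 : EqOn (curl2 u1 u3) (fun y => lam y * u2 y) Ω)
    (h3 : EqOn (curl3 u1 u2) (fun y => lam y * u3 y) Ω) :
    advect u1 u2 u3 lam x + lam x * divergence u1 u2 u3 x = 0 := by
  have hdiff {f : (Fin 3 → ℝ) → ℝ} (hf : ContDiffOn ℝ 2 f Ω) : DifferentiableAt ℝ f x :=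
    (hf.contDiffAt (hΩ.mem_nhds hx)).differentiableAt (by norm_num)
  rw [← divergence_mul hlam (hdiff hu1) (hdiff hu2) (hdiff hu3),
    ← divergence_curl hΩ hx hu1 hu2 hu3]
  simp only [divergence, pd_congr_of_eqOn hΩ hx h1, pd_congr_of_eqOn hΩ hx h2,
    pd_congr_of_eqOn hΩ hx h3]

theorem Dop_eq_advect_div (hu1 : u1 x ≠ 0) :
    Dop u1 u2 u3 f x = advect u1 u2 u3 f x / u1 x := by
  simp only [Dop, advect, beta2, beta3]
  field_simp

end VectorCalculus

section Slopes

variable {u1 u2 u3 : (Fin 3 → ℝ) → ℝ} {y : Fin 3 → ℝ}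

theorem pd_beta2 (hu1 : DifferentiableAt ℝ u1 y) (hu2 : DifferentiableAt ℝ u2 y)
    (hu10 : u1 y ≠ 0) (j : Fin 3) :
    pd j (beta2 u1 u2) y = (pd j u2 y * u1 y - u2 y * pd j u1 y) / u1 y ^ 2 :=
  pd_div hu2 hu1 hu10

theorem pd_beta3 (hu1 : DifferentiableAt ℝ u1 y) (hu3 : DifferentiableAt ℝ u3 y)
    (hu10 : u1 y ≠ 0) (j : Fin 3) :
    pd j (beta3 u1 u3) y = (pd j u3 y * u1 y - u3 y * pd j u1 y) / u1 y ^ 2 :=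
  pd_div hu3 hu1 hu10

theorem Wfun_mul_sq (hu1 : DifferentiableAt ℝ u1 y) (hu2 : DifferentiableAt ℝ u2 y)
    (hu3 : DifferentiableAt ℝ u3 y) (hu10 : u1 y ≠ 0) :
    Wfun u1 u2 u3 y * u1 y ^ 2
      = u1 y * curl1 u2 u3 y + u2 y * curl2 u1 u3 y + u3 y * curl3 u1 u2 y := by
  simp only [Wfun, curl1, curl2, curl3, pd_beta2 hu1 hu2 hu10, pd_beta3 hu1 hu3 hu10, beta2, beta3]
  field_simp
  ring

theorem Gfun_mul_sq (hu10 : u1 y ≠ 0) :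
    Gfun u1 u2 u3 y * u1 y ^ 2 = u1 y ^ 2 + u2 y ^ 2 + u3 y ^ 2 := by
  simp only [Gfun, beta2, beta3]
  field_simp

theorem Wfun_div_Gfun_of_curl_eq (hu1 : DifferentiableAt ℝ u1 y)
    (hu2 : DifferentiableAt ℝ u2 y) (hu3 : DifferentiableAt ℝ u3 y) (hu10 : u1 y ≠ 0) {c : ℝ}
    (h1 : curl1 u2 u3 y = c * u1 y) (h2 : curl2 u1 u3 y = c * u2 y)
    (h3 : curl3 u1 u2 y = c * u3 y) :
    Wfun u1 u2 u3 y / Gfun u1 u2 u3 y = c := by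
  have hW := Wfun_mul_sq hu1 hu2 hu3 hu10
  have hG := Gfun_mul_sq (u2 := u2) (u3 := u3) hu10
  have hG0 : Gfun u1 u2 u3 y ≠ 0 := by
    simp only [Gfun]
    positivity
  rw [div_eq_iff hG0]
  apply mul_right_cancel₀ (pow_ne_zero 2 hu10)
  rw [hW, mul_assoc, hG, h1, h2, h3]
  ring

end Slopes

section Euler

variable {ρ u1 u2 u3 v φ : (Fin 3 → ℝ) → ℝ} {p h : ℝ → ℝ} {c : ℝ} {y : Fin 3 → ℝ} {i : Fin 3}

theorem pd_Bfun (hρ : DifferentiableAt ℝ ρ y) (hu1 : DifferentiableAt ℝ u1 y)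
    (hu2 : DifferentiableAt ℝ u2 y) (hu3 : DifferentiableAt ℝ u3 y)
    (hφ : DifferentiableAt ℝ φ y) (hh : HasDerivAt h c (ρ y)) :
    pd i (Bfun ρ u1 u2 u3 φ h) y
      = u1 y * pd i u1 y + u2 y * pd i u2 y + u3 y * pd i u3 y + c * pd i ρ y - pd i φ y := by
  have hdh : DifferentiableAt ℝ h (ρ y) := hh.differentiableAt
  unfold Bfun
  simp (disch := fun_prop) only [pd_sub, pd_add, pd_mul, pd_pow, pd_const, pd_comp hh hρ]
  push_cast
  ring

theorem rho_mul_advect_of_momentum (hρ : DifferentiableAt ℝ ρ y) (hv : DifferentiableAt ℝ v y)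
    (hu1 : DifferentiableAt ℝ u1 y) (hu2 : DifferentiableAt ℝ u2 y)
    (hu3 : DifferentiableAt ℝ u3 y) (hp : HasDerivAt p c (ρ y))
    (hcont : divergence (fun z => ρ z * u1 z) (fun z => ρ z * u2 z) (fun z => ρ z * u3 z) y = 0)
    (hmom : pd 0 (fun z => ρ z * v z * u1 z) y + pd 1 (fun z => ρ z * v z * u2 z) y
        + pd 2 (fun z => ρ z * v z * u3 z) y + pd i (fun z => p (ρ z)) y = ρ y * pd i φ y) :
    ρ y * advect u1 u2 u3 v y + c * pd i ρ y = ρ y * pd i φ y := by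
  have hρv : DifferentiableAt ℝ (fun z => ρ z * v z) y := hρ.mul hv
  rw [pd_mul hρv hu1, pd_mul hρv hu2, pd_mul hρv hu3, pd_mul hρ hv, pd_mul hρ hv, pd_mul hρ hv,
    pd_comp hp hρ] at hmom
  rw [divergence_mul hρ hu1 hu2 hu3] at hcont
  unfold advect divergence at *
  linear_combination hmom - v y * hcont

theorem advect_eq_of_pd_Bfun_eq_zero (hρ : DifferentiableAt ℝ ρ y)
    (hu1 : DifferentiableAt ℝ u1 y) (hu2 : DifferentiableAt ℝ u2 y)
    (hu3 : DifferentiableAt ℝ u3 y) (hφ : DifferentiableAt ℝ φ y) (hρ0 : ρ y ≠ 0)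
    (hh : HasDerivAt h (c / ρ y) (ρ y))
    (hmom : ρ y * advect u1 u2 u3 v y + c * pd i ρ y = ρ y * pd i φ y)
    (hB : pd i (Bfun ρ u1 u2 u3 φ h) y = 0) :
    advect u1 u2 u3 v y = u1 y * pd i u1 y + u2 y * pd i u2 y + u3 y * pd i u3 y := by
  rw [pd_Bfun hρ hu1 hu2 hu3 hφ hh] at hB
  apply mul_left_cancel₀ hρ0
  field_simp at hB
  linear_combination hmom - hB

/-- Two components of the identity `(u · ∇) u - ∇ (|u|² / 2) = curl u × u`. -/
theorem curl2_eq_of_advect (hu10 : u1 y ≠ 0)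
    (h : advect u1 u2 u3 u3 y = u1 y * pd 2 u1 y + u2 y * pd 2 u2 y + u3 y * pd 2 u3 y) :
    curl2 u1 u3 y = curl1 u2 u3 y / u1 y * u2 y := by
  unfold advect at h
  unfold curl1 curl2
  field_simp
  linear_combination -h

theorem curl3_eq_of_advect (hu10 : u1 y ≠ 0)
    (h : advect u1 u2 u3 u2 y = u1 y * pd 1 u1 y + u2 y * pd 1 u2 y + u3 y * pd 1 u3 y) :
    curl3 u1 u2 y = curl1 u2 u3 y / u1 y * u3 y := by
  unfold advect at h
  unfold curl1 curl3
  field_simp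
  linear_combination h

theorem curl_eq_of_Bfun_eqOn_const {Ω : Set (Fin 3 → ℝ)} (hΩ : IsOpen Ω) (hy : y ∈ Ω)
    (hρ : DifferentiableAt ℝ ρ y) (hu1 : DifferentiableAt ℝ u1 y)
    (hu2 : DifferentiableAt ℝ u2 y) (hu3 : DifferentiableAt ℝ u3 y)
    (hφ : DifferentiableAt ℝ φ y) (hρ0 : ρ y ≠ 0) (hu10 : u1 y ≠ 0)
    (hp : HasDerivAt p c (ρ y)) (hh : HasDerivAt h (c / ρ y) (ρ y))
    (hcont : divergence (fun z => ρ z * u1 z) (fun z => ρ z * u2 z) (fun z => ρ z * u3 z) y = 0)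
    (hmom2 : pd 0 (fun z => ρ z * u2 z * u1 z) y + pd 1 (fun z => ρ z * u2 z * u2 z) y
        + pd 2 (fun z => ρ z * u2 z * u3 z) y + pd 1 (fun z => p (ρ z)) y = ρ y * pd 1 φ y)
    (hmom3 : pd 0 (fun z => ρ z * u3 z * u1 z) y + pd 1 (fun z => ρ z * u3 z * u2 z) y
        + pd 2 (fun z => ρ z * u3 z * u3 z) y + pd 2 (fun z => p (ρ z)) y = ρ y * pd 2 φ y)
    (hB : EqOn (Bfun ρ u1 u2 u3 φ h) (fun _ => Bfun ρ u1 u2 u3 φ h y) Ω) :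
    curl2 u1 u3 y = curl1 u2 u3 y / u1 y * u2 y ∧ curl3 u1 u2 y = curl1 u2 u3 y / u1 y * u3 y := by
  have hB' (j : Fin 3) : pd j (Bfun ρ u1 u2 u3 φ h) y = 0 := by
    rw [pd_congr_of_eqOn hΩ hy hB, pd_const]
  exact ⟨curl2_eq_of_advect hu10 <| advect_eq_of_pd_Bfun_eq_zero hρ hu1 hu2 hu3 hφ hρ0 hh
      (rho_mul_advect_of_momentum hρ hu3 hu1 hu2 hu3 hp hcont hmom3) (hB' 2),
    curl3_eq_of_advect hu10 <| advect_eq_of_pd_Bfun_eq_zero hρ hu1 hu2 hu3 hφ hρ0 hh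
      (rho_mul_advect_of_momentum hρ hu2 hu1 hu2 hu3 hp hcont hmom2) (hB' 1)⟩

end Euler

theorem W_over_rhoG_conserved_general
    (Ω : Set (Fin 3 → ℝ)) (hΩ : IsOpen Ω)
    (ρ u1 u2 u3 φ : (Fin 3 → ℝ) → ℝ)
    (p p' h : ℝ → ℝ)
    (hρpos : ∀ x ∈ Ω, 0 < ρ x)
    (hu1pos : ∀ x ∈ Ω, 0 < u1 x)
    (hρ : ContDiffOn ℝ 2 ρ Ω) (hu1 : ContDiffOn ℝ 2 u1 Ω)
    (hu2 : ContDiffOn ℝ 2 u2 Ω) (hu3 : ContDiffOn ℝ 2 u3 Ω)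
    (hφ : ContDiffOn ℝ 2 φ Ω)
    (hp : ∀ r : ℝ, 0 < r → HasDerivAt p (p' r) r)
    (hh : ∀ r : ℝ, 0 < r → HasDerivAt h (p' r / r) r)
    (hcont : ∀ x ∈ Ω,
      pd 0 (fun y => ρ y * u1 y) x + pd 1 (fun y => ρ y * u2 y) x
        + pd 2 (fun y => ρ y * u3 y) x = 0)
    (hmom2 : ∀ x ∈ Ω,
      pd 0 (fun y => ρ y * u2 y * u1 y) x + pd 1 (fun y => ρ y * u2 y * u2 y) x
        + pd 2 (fun y => ρ y * u2 y * u3 y) x + pd 1 (fun y => p (ρ y)) x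
        = ρ x * pd 1 φ x)
    (hmom3 : ∀ x ∈ Ω,
      pd 0 (fun y => ρ y * u3 y * u1 y) x + pd 1 (fun y => ρ y * u3 y * u2 y) x
        + pd 2 (fun y => ρ y * u3 y * u3 y) x + pd 2 (fun y => p (ρ y)) x
        = ρ x * pd 2 φ x)
    (hBconst : ∀ x ∈ Ω, ∀ y ∈ Ω, Bfun ρ u1 u2 u3 φ h x = Bfun ρ u1 u2 u3 φ h y) :
    ∀ x ∈ Ω,
      Dop u1 u2 u3 (fun y => Wfun u1 u2 u3 y / (ρ y * Gfun u1 u2 u3 y)) x = 0 := by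
  intro x hx
  have hdiff {f : (Fin 3 → ℝ) → ℝ} (hf : ContDiffOn ℝ 2 f Ω) {y} (hy : y ∈ Ω) :
      DifferentiableAt ℝ f y :=
    (hf.contDiffAt (hΩ.mem_nhds hy)).differentiableAt (by norm_num)
  set lam : (Fin 3 → ℝ) → ℝ := fun y => curl1 u2 u3 y / u1 y
  have hcurl1 : EqOn (curl1 u2 u3) (fun y => lam y * u1 y) Ω := fun y hy =>
    (div_mul_cancel₀ _ (hu1pos y hy).ne').symm
  have hcurl (y) (hy : y ∈ Ω) :
      curl2 u1 u3 y = lam y * u2 y ∧ curl3 u1 u2 y = lam y * u3 y :=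
    curl_eq_of_Bfun_eqOn_const hΩ hy (hdiff hρ hy) (hdiff hu1 hy) (hdiff hu2 hy)
      (hdiff hu3 hy) (hdiff hφ hy) (hρpos y hy).ne' (hu1pos y hy).ne' (hp _ (hρpos y hy))
      (hh _ (hρpos y hy)) (hcont y hy) (hmom2 y hy) (hmom3 y hy) (fun z hz => hBconst z hz y hy)
  have hW : EqOn (fun y => Wfun u1 u2 u3 y / (ρ y * Gfun u1 u2 u3 y)) (fun y => lam y / ρ y) Ω :=
    fun y hy => by
      dsimp only
      rw [mul_comm, ← div_div, Wfun_div_Gfun_of_curl_eq (hdiff hu1 hy) (hdiff hu2 hy)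
        (hdiff hu3 hy) (hu1pos y hy).ne' (hcurl1 hy) (hcurl y hy).1 (hcurl y hy).2]
  have hlam_diff : DifferentiableAt ℝ lam x :=
    ((differentiableAt_pd hΩ hu3 hx 1).sub (differentiableAt_pd hΩ hu2 hx 2)).mul
      ((hdiff hu1 hx).inv (hu1pos x hx).ne')
  have hlam := advect_add_mul_divergence_of_curl_eq hΩ hx hu1 hu2 hu3 hlam_diff hcurl1
    (fun y hy => (hcurl y hy).1) (fun y hy => (hcurl y hy).2)
  have hmass : advect u1 u2 u3 ρ x + ρ x * divergence u1 u2 u3 x = 0 :=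
    (divergence_mul (hdiff hρ hx) (hdiff hu1 hx) (hdiff hu2 hx) (hdiff hu3 hx)).symm.trans
      (hcont x hx)
  rw [Dop_eq_advect_div (hu1pos x hx).ne', advect_congr_of_eqOn hΩ hx hW,
    advect_div_eq_zero hlam_diff (hdiff hρ hx) (hρpos x hx).ne' hlam hmass, zero_div]

/-- If the Bernoulli function is constant, the quantity `W/(ρG)` is conserved along the
particle paths: `D(W/(ρG)) = 0`. -/
theorem W_over_rhoG_conserved
    (Ω : Set (Fin 3 → ℝ)) (hΩ : IsOpen Ω)
    (ρ u1 u2 u3 φ : (Fin 3 → ℝ) → ℝ)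
    (p p' h : ℝ → ℝ)
    (hρpos : ∀ x ∈ Ω, 0 < ρ x)
    (hu1pos : ∀ x ∈ Ω, 0 < u1 x)
    (hρ : ContDiffOn ℝ 2 ρ Ω) (hu1 : ContDiffOn ℝ 2 u1 Ω)
    (hu2 : ContDiffOn ℝ 2 u2 Ω) (hu3 : ContDiffOn ℝ 2 u3 Ω)
    (hφ : ContDiffOn ℝ 2 φ Ω)
    (hpC : ContDiffOn ℝ 2 p (Set.Ioi 0))
    (hp : ∀ r : ℝ, 0 < r → HasDerivAt p (p' r) r)
    (hh : ∀ r : ℝ, 0 < r → HasDerivAt h (p' r / r) r)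
    (hcont : ∀ x ∈ Ω,
      pd 0 (fun y => ρ y * u1 y) x + pd 1 (fun y => ρ y * u2 y) x
        + pd 2 (fun y => ρ y * u3 y) x = 0)
    (hmom1 : ∀ x ∈ Ω,
      pd 0 (fun y => ρ y * u1 y * u1 y) x + pd 1 (fun y => ρ y * u1 y * u2 y) x
        + pd 2 (fun y => ρ y * u1 y * u3 y) x + pd 0 (fun y => p (ρ y)) x
        = ρ x * pd 0 φ x)
    (hmom2 : ∀ x ∈ Ω,
      pd 0 (fun y => ρ y * u2 y * u1 y) x + pd 1 (fun y => ρ y * u2 y * u2 y) x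
        + pd 2 (fun y => ρ y * u2 y * u3 y) x + pd 1 (fun y => p (ρ y)) x
        = ρ x * pd 1 φ x)
    (hmom3 : ∀ x ∈ Ω,
      pd 0 (fun y => ρ y * u3 y * u1 y) x + pd 1 (fun y => ρ y * u3 y * u2 y) x
        + pd 2 (fun y => ρ y * u3 y * u3 y) x + pd 2 (fun y => p (ρ y)) x
        = ρ x * pd 2 φ x)
    (hBconst : ∀ x ∈ Ω, ∀ y ∈ Ω, Bfun ρ u1 u2 u3 φ h x = Bfun ρ u1 u2 u3 φ h y) :
    ∀ x ∈ Ω,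
      Dop u1 u2 u3 (fun y => Wfun u1 u2 u3 y / (ρ y * Gfun u1 u2 u3 y)) x = 0 :=
  W_over_rhoG_conserved_general Ω hΩ ρ u1 u2 u3 φ p p' h hρpos hu1pos hρ hu1 hu2 hu3 hφ hp hh hcont
    hmom2 hmom3 hBconst
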